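/- Define δ_q(u) = α + β − 2αβ + ((λ₊ − λ₋)/(2 + λ₊ + λ₋))·(α − β), where α = (λ₊^q−1)/(λ₊−1), β = (λ₋^q−1)/(λ₋−1), and λ±(u) are the roots of X² − (u²+2)X + 1. Then δ_q(u) ∈ ℤ[u], and deg δ_q(u) = 2q − 4 for every integer q > 1. -/

import Mathlib

open Polynomial

/-- `λ₊(u) = ((u²+2) + r)/2` where `r` is a square root of `u⁴+4u²`. -/
noncomputable def lamp (u r : ℂ) : ℂ := (u ^ 2 + 2 + r) / 2

/-- `λ₋(u) = ((u²+2) - r)/2` where `r` is a square root of `u⁴+4u²`. -/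
noncomputable def lamm (u r : ℂ) : ℂ := (u ^ 2 + 2 - r) / 2

/-- `D` is the polynomial `δ_q`, the middle coefficient of the twisted
Alexander polynomial, characterized by its value
`α + β - 2αβ + ((λ₊-λ₋)/(2+λ₊+λ₋))(α-β)` with `α = (λ₊^q-1)/(λ₊-1)`,
`β = (λ₋^q-1)/(λ₋-1)`. -/
def DeltaRel (q : ℤ) (D : Polynomial ℤ) : Prop :=
  ∀ u r : ℂ, r ^ 2 = u ^ 4 + 4 * u ^ 2 →
    lamp u r ≠ 1 → lamm u r ≠ 1 → 2 + lamp u r + lamm u r ≠ 0 →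
    (Polynomial.aeval u D : ℂ) =
      ((lamp u r) ^ q - 1) / (lamp u r - 1) + ((lamm u r) ^ q - 1) / (lamm u r - 1)
        - 2 * (((lamp u r) ^ q - 1) / (lamp u r - 1)) * (((lamm u r) ^ q - 1) / (lamm u r - 1))
        + ((lamp u r - lamm u r) / (2 + lamp u r + lamm u r)) *
            (((lamp u r) ^ q - 1) / (lamp u r - 1) - ((lamm u r) ^ q - 1) / (lamm u r - 1))

/-!
Write `a = λ₊`, `b = λ₋`, so that `a * b = 1` and `a + b = u² + 2`. With the Chebyshev polynomials
`C_m(a + b) = aᵐ + bᵐ` and `S_i(a + b) = (aⁱ⁺¹ - bⁱ⁺¹) / (a - b)`, the telescoping identity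
`(X² - 4) * ∑_{i<n} S_i = C_{n+1} + C_n - X - 2` reduces the claim
`δ_q(u) = -4 * ∑_{i<q-1} S_i(u² + 2)`, after multiplication by `(a + b)² - 4 = (a - b)²`, to an
identity of rational functions of `a` and `a^q`. Since `S_i` has degree `i`, `δ_q` has degree
`2 * (q - 2)`.
-/

namespace Polynomial.Chebyshev

variable (R : Type*) [CommRing R]

theorem X_sq_sub_four_mul_S (n : ℤ) : (X ^ 2 - 4) * S R n = C R (n + 2) - C R n := by
  linear_combination (norm := ring_nf) C_eq_S_sub_X_mul_S R n - C_eq_S_sub_X_mul_S R (n + 2)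
    - 2 * S_add_two R n - X * S_add_one R n

theorem X_sq_sub_four_mul_sum_S (n : ℕ) :
    (X ^ 2 - 4) * ∑ i ∈ Finset.range n, S R i = C R (n + 1 : ℕ) + C R n - X - 2 := by
  induction n with
  | zero => simp
  | succ n ih =>
    rw [Finset.sum_range_succ, mul_add, ih, X_sq_sub_four_mul_S]
    push_cast
    ring_nf

theorem C_eval_add_of_mul_eq_one {a b : R} (hab : a * b = 1) (n : ℕ) :
    (C R n).eval (a + b) = a ^ n + b ^ n := by
  rw [← dickson_one_one_eq_chebyshev_C, dickson_one_one_eval_add_inv a b hab]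

theorem S_natCast_add_two (n : ℕ) : S R (n + 2 : ℕ) = X * S R (n + 1 : ℕ) - S R n := by
  push_cast
  exact S_add_two R n

variable [Nontrivial R]

theorem degree_S_natCast (n : ℕ) : (S R n).degree = n := by
  induction n using Nat.twoStepInduction with
  | zero => simp
  | one => simp
  | more n ih1 ih2 =>
    have hX : (X * S R (n + 1 : ℕ)).degree = ↑(n + 2) := by
      rw [mul_comm, degree_mul_X, ih2]; norm_cast
    rw [S_natCast_add_two, degree_sub_eq_left_of_degree_lt, hX]
    rw [ih1, hX]; norm_cast; omega

theorem degree_sum_range_S (n : ℕ) : (∑ i ∈ Finset.range (n + 1), S R i).degree = n := by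
  induction n with
  | zero => simp
  | succ n ih =>
    rw [Finset.sum_range_succ, degree_add_eq_right_of_degree_lt, degree_S_natCast]
    rw [ih, degree_S_natCast]
    exact_mod_cast n.lt_succ_self

end Polynomial.Chebyshev

theorem delta_eq_neg_four_mul {K : Type*} [Field K] {a b W : K} (n : ℕ) (hab : a * b = 1)
    (ha : a ≠ 1) (hb : b ≠ 1) (h2ab : 2 + a + b ≠ 0)
    (hW : ((a + b) ^ 2 - 4) * W = a ^ (n + 1) + b ^ (n + 1) + (a ^ n + b ^ n) - (a + b) - 2) :
    (a ^ (n + 1) - 1) / (a - 1) + (b ^ (n + 1) - 1) / (b - 1)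
        - 2 * ((a ^ (n + 1) - 1) / (a - 1)) * ((b ^ (n + 1) - 1) / (b - 1))
        + (a - b) / (2 + a + b) * ((a ^ (n + 1) - 1) / (a - 1) - (b ^ (n + 1) - 1) / (b - 1))
      = -4 * W := by
  have ha' : a - 1 ≠ 0 := sub_ne_zero.mpr ha
  have hb' : b - 1 ≠ 0 := sub_ne_zero.mpr hb
  have hden : (a + b) ^ 2 - 4 ≠ 0 := by
    have : (a + b) ^ 2 - 4 = -((a - 1) * (b - 1) * (2 + a + b)) := by
      linear_combination (2 + a + b) * hab
    rw [this]
    exact neg_ne_zero.mpr (mul_ne_zero (mul_ne_zero ha' hb') h2ab)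
  apply mul_left_cancel₀ hden
  rw [mul_left_comm, hW]
  obtain rfl : b = a⁻¹ := eq_inv_of_mul_eq_one_right hab
  have ha0 : a ≠ 0 := left_ne_zero_of_mul_eq_one hab
  have ha1 : a + 1 ≠ 0 := by
    rintro h
    rw [eq_neg_of_add_eq_zero_left h] at h2ab
    norm_num at h2ab
  -- exposes the denominator `2 + a + a⁻¹` to `field_simp` as a product of nonzero factors
  have h2a : 2 + a + a⁻¹ = (a + 1) ^ 2 / a := by field_simp; ring
  rw [h2a]
  simp only [inv_pow, pow_succ _ n]
  field_simp
  ring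

noncomputable def deltaPoly (q : ℕ) : ℤ[X] :=
  C (-4) * (∑ i ∈ Finset.range (q - 1), Chebyshev.S ℤ i).comp (X ^ 2 + 2)

theorem natDegree_deltaPoly (n : ℕ) : (deltaPoly (n + 2)).natDegree = 2 * n := by
  have hquad : (X ^ 2 + 2 : ℤ[X]).natDegree = 2 := by compute_degree!
  rw [deltaPoly, show n + 2 - 1 = n + 1 from rfl, natDegree_C_mul (by norm_num), natDegree_comp,
    hquad, natDegree_eq_of_degree_eq_some (Chebyshev.degree_sum_range_S ℤ n), mul_comm]

theorem deltaRel_deltaPoly (n : ℕ) : DeltaRel (n + 1 : ℕ) (deltaPoly (n + 1)) := by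
  intro u r hr ha hb h2ab
  set a := lamp u r
  set b := lamm u r
  have hab : a * b = 1 := by
    simp only [a, b, lamp, lamm]
    linear_combination -hr / 4
  have hsum : u ^ 2 + 2 = a + b := by simp only [a, b, lamp, lamm]; ring
  have hW := congrArg (aeval (a + b)) (Chebyshev.X_sq_sub_four_mul_sum_S ℤ n)
  simp only [map_mul, map_sub, map_add, aeval_X, map_pow, map_ofNat, Chebyshev.aeval_C,
    Chebyshev.C_eval_add_of_mul_eq_one ℂ hab] at hW
  rw [zpow_natCast, zpow_natCast, delta_eq_neg_four_mul n hab ha hb h2ab hW, deltaPoly,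
    Nat.add_sub_cancel, map_mul, aeval_comp]
  simp only [aeval_C, map_add, map_pow, aeval_X, map_ofNat, hsum]
  norm_num

/-- δ_q is an integer polynomial in u of degree 2q - 4 for every integer q > 1. -/
theorem stmt_16 (q : ℤ) (hq : 1 < q) :
    ∃ D : Polynomial ℤ, DeltaRel q D ∧ D.natDegree = 2 * q.toNat - 4 := by
  obtain ⟨n, rfl⟩ : ∃ n : ℕ, q = (n + 2 : ℕ) := ⟨q.toNat - 2, by omega⟩
  refine ⟨deltaPoly (n + 2), deltaRel_deltaPoly (n + 1), ?_⟩
  rw [natDegree_deltaPoly, Int.toNat_natCast]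
  omega
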